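/- arXiv:0907.2447 — 2 statements merged into one kernel-verified Lean document; each statement's English description precedes it below -/
import Mathlib

section
/- Let a > 0 be a real number, N ≥ 1, c₁,...,c_N complex numbers not all zero, and λ₁,...,λ_N distinct real numbers. Then the function f(s) = e^{as} · Σ_{k=1}^N c_k e^{iλ_k s} is unbounded on [0,∞). -/
/-!
Suppose `‖f‖ ≤ M` on `[0, ∞)`, so that `g(s) = ∑ c_k e^{iλ_k s}` satisfies
`‖g(s)‖ ≤ M e^{-as}`. Then `∫₀^T e^{-iλ_j s} g(s) ds` stays bounded by `M / a`.
Integrating term by term, this integral is `c_j T` plus the integrals of the oscillating terms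
`c_k e^{i(λ_k - λ_j)s}`, `k ≠ j`, which are bounded in `T` because the frequencies are
distinct. Hence `‖c_j‖ T` is bounded, so `c_j = 0`.
-/

open Complex Finset

theorem norm_integral_le_div_of_norm_le_exp_neg {E : Type*} [NormedAddCommGroup E]
    [NormedSpace ℝ E] {h : ℝ → E} {a M T : ℝ} (ha : 0 < a) (hT : 0 ≤ T)
    (hh : ∀ s, 0 ≤ s → ‖h s‖ ≤ M * Real.exp (-(a * s))) :
    ‖∫ s in (0 : ℝ)..T, h s‖ ≤ M / a := by
  have hM : 0 ≤ M := (norm_nonneg _).trans (by simpa using hh 0 le_rfl)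
  have hprim : ∀ s ∈ Set.uIcc 0 T, HasDerivAt (fun s => -(M / a) * Real.exp (-(a * s)))
      (M * Real.exp (-(a * s))) s := fun s _ => by
    refine (((hasDerivAt_id' s).const_mul a).neg.exp.const_mul (-(M / a))).congr_deriv ?_
    field_simp
    rfl
  calc ‖∫ s in (0 : ℝ)..T, h s‖
      ≤ ∫ s in (0 : ℝ)..T, M * Real.exp (-(a * s)) :=
        intervalIntegral.norm_integral_le_of_norm_le hT
          (Filter.Eventually.of_forall fun s hs => hh s hs.1.le)
          ((by fun_prop : Continuous _).intervalIntegrable _ _)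
    _ = M / a - M / a * Real.exp (-(a * T)) := by
        rw [intervalIntegral.integral_eq_sub_of_hasDerivAt hprim
          ((by fun_prop : Continuous _).intervalIntegrable _ _)]
        simp only [mul_zero, neg_zero, Real.exp_zero]
        ring
    _ ≤ M / a := sub_le_self _ (by positivity)

theorem norm_integral_exp_I_mul_le {ω : ℝ} (hω : ω ≠ 0) (T : ℝ) :
    ‖∫ s in (0 : ℝ)..T, exp (I * (ω * s))‖ ≤ 2 / |ω| := by
  have hIω : I * ω ≠ 0 := mul_ne_zero I_ne_zero (ofReal_ne_zero.2 hω)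
  simp_rw [← mul_assoc]
  rw [integral_exp_mul_complex hIω, norm_div, norm_mul, norm_I, one_mul, norm_real,
    Real.norm_eq_abs]
  gcongr
  calc ‖exp (I * ω * T) - exp (I * ω * (0 : ℝ))‖
      ≤ ‖exp (I * ω * T)‖ + ‖exp (I * ω * (0 : ℝ))‖ := norm_sub_le _ _
    _ = 2 := by
        simp only [mul_assoc, ← ofReal_mul, norm_exp_I_mul_ofReal]
        norm_num

theorem sum_mul_exp_neg_I_mul {ι : Type*} [Fintype ι] (c : ι → ℂ) (lam : ι → ℝ)
    (μ s : ℝ) :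
    (∑ k, c k * exp (I * (lam k * s))) * exp (-(I * (μ * s)))
      = ∑ k, c k * exp (I * ((lam k - μ : ℝ) * s)) := by
  rw [sum_mul]
  refine sum_congr rfl fun k _ => ?_
  rw [mul_assoc, ← exp_add]
  push_cast
  ring_nf

theorem norm_integral_sum_exp_I_mul_sub_le {ι : Type*} [Fintype ι] [DecidableEq ι]
    (c : ι → ℂ) {lam : ι → ℝ} (hlam : Function.Injective lam) (j : ι) (T : ℝ) :
    ‖(∫ s in (0 : ℝ)..T, ∑ k, c k * exp (I * ((lam k - lam j : ℝ) * s))) - c j * T‖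
      ≤ ∑ k ∈ univ.erase j, ‖c k‖ * (2 / |lam k - lam j|) := by
  rw [intervalIntegral.integral_finsetSum
      fun k _ => (by fun_prop : Continuous _).intervalIntegrable _ _,
    ← add_sum_erase _ _ (mem_univ j)]
  simp only [sub_self, ofReal_zero, zero_mul, mul_zero, Complex.exp_zero,
    intervalIntegral.integral_const_mul, intervalIntegral.integral_const, sub_zero,
    real_smul, mul_one, mul_comm (T : ℂ), add_sub_cancel_left]
  refine (norm_sum_le _ _).trans (sum_le_sum fun k hk => ?_)
  have hkj : lam k - lam j ≠ 0 := sub_ne_zero.2 fun h => (mem_erase.1 hk).1 (hlam h)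
  rw [norm_mul]
  gcongr
  exact norm_integral_exp_I_mul_le hkj T

theorem eq_zero_of_norm_sum_exp_I_mul_le_exp_neg {ι : Type*} [Fintype ι] {c : ι → ℂ}
    {lam : ι → ℝ} (hlam : Function.Injective lam) {a M : ℝ} (ha : 0 < a)
    (hg : ∀ s : ℝ, 0 ≤ s →
      ‖∑ k, c k * exp (I * (lam k * s))‖ ≤ M * Real.exp (-(a * s)))
    (j : ι) : c j = 0 := by
  classical
  set B := ∑ k ∈ univ.erase j, ‖c k‖ * (2 / |lam k - lam j|)
  have hlin : ∀ T, 0 ≤ T → ‖c j‖ * T ≤ M / a + B := fun T hT => by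
    set J := ∫ s in (0 : ℝ)..T, ∑ k, c k * exp (I * ((lam k - lam j : ℝ) * s))
    have hJ : ‖J‖ ≤ M / a := by
      refine norm_integral_le_div_of_norm_le_exp_neg ha hT fun s hs => ?_
      have hunit : ‖exp (-(I * (lam j * s)))‖ = 1 := by
        rw [norm_exp]
        simp
      rw [← sum_mul_exp_neg_I_mul, norm_mul, hunit, mul_one]
      exact hg s hs
    calc ‖c j‖ * T = ‖c j * T‖ := by rw [norm_mul, norm_real, Real.norm_of_nonneg hT]
      _ ≤ ‖J‖ + ‖J - c j * T‖ := norm_le_norm_add_norm_sub _ _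
      _ ≤ M / a + B := add_le_add hJ (norm_integral_sum_exp_I_mul_sub_le c hlam j T)
  by_contra hcj
  have hpos : 0 < ‖c j‖ := norm_pos_iff.2 hcj
  have := hlin ((M / a + B + 1) / ‖c j‖) (div_nonneg (by linarith [hlin 0 le_rfl]) hpos.le)
  rw [mul_div_cancel₀ _ hpos.ne'] at this
  linarith

theorem stmt_0_general (a : ℝ) (ha : 0 < a) (N : ℕ)
    (c : Fin N → ℂ) (hc : ∃ k, c k ≠ 0)
    (lam : Fin N → ℝ) (hlam : Function.Injective lam)
    (f : ℝ → ℂ)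
    (hf : ∀ s : ℝ, f s = Real.exp (a * s) * ∑ k, c k * Complex.exp (Complex.I * (lam k * s))) :
    ¬ ∃ M : ℝ, ∀ s : ℝ, 0 ≤ s → ‖f s‖ ≤ M := by
  rintro ⟨M, hM⟩
  obtain ⟨j, hj⟩ := hc
  refine hj (eq_zero_of_norm_sum_exp_I_mul_le_exp_neg (M := M) hlam ha (fun s hs => ?_) j)
  have hfs := hM s hs
  rw [hf, norm_mul, norm_real, Real.norm_of_nonneg (Real.exp_pos _).le] at hfs
  rw [Real.exp_neg, ← div_eq_mul_inv, le_div_iff₀ (Real.exp_pos _), mul_comm]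
  exact hfs

theorem stmt_0 (a : ℝ) (ha : 0 < a) (N : ℕ) (hN : 1 ≤ N)
    (c : Fin N → ℂ) (hc : ∃ k, c k ≠ 0)
    (lam : Fin N → ℝ) (hlam : Function.Injective lam)
    (f : ℝ → ℂ)
    (hf : ∀ s : ℝ, f s = Real.exp (a * s) * ∑ k, c k * Complex.exp (Complex.I * (lam k * s))) :
    ¬ ∃ M : ℝ, ∀ s : ℝ, 0 ≤ s → ‖f s‖ ≤ M :=
  stmt_0_general a ha N c hc lam hlam f hf
end

section
/- Let W be a finite reflection group on ℝ^q with closed chamber C, let ρ ∈ C, and suppose ξ ∈ C lies in the interior of co(W·ρ). Then there exist s ∈ (0,1) and ε = 1 - s > 0 such that ξ ∈ co(W·(s·ρ)), and consequently ⟨ξ - ρ, t⟩ ≤ -ε·⟨ρ, t⟩ for all t ∈ C. -/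
/-!
The heart of the matter is the dominance inequality `⟪w ρ, t⟫ ≤ ⟪ρ, t⟫` for `w ∈ W` and `ρ`, `t`
in the chamber. A vector `v` off all root hyperplanes and positive on every root that is positive
on `ρ + t` singles out a positive system for which `ρ` and `t` are dominant. If `w` sends a simple
root `δ` to a negative root, then `w s_δ` has fewer inversions and `⟪w ρ, t⟫ ≤ ⟪w s_δ ρ, t⟫`; if it
sends none, the exchange condition forces `w = 1`.
Since `ξ` is interior to `co(W·ρ)`, also `s⁻¹ ξ ∈ co(W·ρ)` for some `s < 1`, i.e.
`ξ ∈ co(W·(sρ))`, and by dominance every point `z` of this hull satisfies `⟪z, t⟫ ≤ s ⟪ρ, t⟫`.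
-/

open scoped RealInnerProductSpace Pointwise Classical
open Filter Topology

variable {E : Type*} [NormedAddCommGroup E] [InnerProductSpace ℝ E]

noncomputable def rootReflection (α : E) : E ≃ₗᵢ[ℝ] E := (ℝ ∙ α)ᗮ.reflection

lemma rootReflection_apply (α x : E) :
    rootReflection α x = x - (2 * ⟪α, x⟫ / ‖α‖ ^ 2) • α := by
  rw [rootReflection, Submodule.reflection_orthogonal_apply,
    Submodule.reflection_singleton_apply, RCLike.ofReal_real_eq_id, id, two_nsmul, ← two_smul ℝ,
    smul_smul]
  module

@[simp]
lemma rootReflection_self (α : E) : rootReflection α α = -α :=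
  Submodule.reflection_orthogonalComplement_singleton_eq_neg α

@[simp]
lemma rootReflection_rootReflection (α x : E) : rootReflection α (rootReflection α x) = x :=
  Submodule.reflection_reflection _ x

@[simp]
lemma rootReflection_inv (α : E) : (rootReflection α)⁻¹ = rootReflection α :=
  Submodule.reflection_inv

@[simp]
lemma rootReflection_mul_self (α : E) : rootReflection α * rootReflection α = 1 :=
  Submodule.reflection_mul_reflection _

lemma rootReflection_smul (α : E) {c : ℝ} (hc : c ≠ 0) :
    rootReflection (c • α) = rootReflection α := by
  simp only [rootReflection, Submodule.span_singleton_smul_eq (IsUnit.mk0 c hc)]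

@[simp]
lemma rootReflection_neg (α : E) : rootReflection (-α) = rootReflection α := by
  simpa using rootReflection_smul α (c := -1) (by norm_num)

lemma rootReflection_map (u : E ≃ₗᵢ[ℝ] E) (α : E) :
    rootReflection (u α) = u * rootReflection α * u⁻¹ := by
  ext x : 1
  have : (ℝ ∙ u α)ᗮ = ((ℝ ∙ α)ᗮ).map (u.toLinearEquiv : E →ₗ[ℝ] E) := by
    rw [Submodule.map_orthogonal_equiv, Submodule.map_span, Set.image_singleton]; rfl
  simp only [rootReflection, this, Submodule.reflection_map_apply]
  rfl

lemma inner_nonneg_of_mem_hull {s : Set E} {v x : E} (hs : ∀ γ ∈ s, 0 ≤ ⟪v, γ⟫)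
    (hx : x ∈ PointedCone.hull ℝ s) : 0 ≤ ⟪v, x⟫ := by
  induction hx using Submodule.span_induction with
  | mem γ hγ => exact hs γ hγ
  | zero => simp
  | add x y _ _ hx hy => rw [inner_add_right]; exact add_nonneg hx hy
  | smul a x _ hx => rw [← Nonneg.coe_smul, real_inner_smul_right]; exact mul_nonneg a.2 hx

lemma eq_zero_of_mem_hull_of_inner_nonpos {s : Set E} {v x : E} (hs : ∀ γ ∈ s, 0 < ⟪v, γ⟫)
    (hx : x ∈ PointedCone.hull ℝ s) (hvx : ⟪v, x⟫ ≤ 0) : x = 0 := by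
  have hs' : ∀ γ ∈ s, 0 ≤ ⟪v, γ⟫ := fun γ hγ => (hs γ hγ).le
  induction hx using Submodule.span_induction with
  | mem γ hγ => exact absurd hvx (hs γ hγ).not_ge
  | zero => rfl
  | add x y hx hy ihx ihy =>
    have := inner_nonneg_of_mem_hull hs' hx
    have := inner_nonneg_of_mem_hull hs' hy
    rw [inner_add_right] at hvx
    rw [ihx (by linarith), ihy (by linarith), add_zero]
  | smul a x hx ih =>
    rw [← Nonneg.coe_smul, real_inner_smul_right] at hvx
    rcases a.2.eq_or_lt with ha | ha
    · rw [← Nonneg.coe_smul, ← ha, zero_smul]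
    · rw [ih (nonpos_of_mul_nonpos_right hvx ha), smul_zero]

structure PositiveSystem (E : Type*) [NormedAddCommGroup E] [InnerProductSpace ℝ E] where
  W : Subgroup (E ≃ₗᵢ[ℝ] E)
  pos : Finset E
  height : E
  inner_height_pos : ∀ γ ∈ pos, 0 < ⟪height, γ⟫
  rootReflection_mem : ∀ γ ∈ pos, rootReflection γ ∈ W
  apply_mem_or_neg_mem : ∀ w ∈ W, ∀ γ ∈ pos, w γ ∈ pos ∨ -w γ ∈ pos
  le_closure : W ≤ Subgroup.closure (rootReflection '' pos)

namespace PositiveSystem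

variable (Φ : PositiveSystem E)

/-- Irredundant generators of the cone spanned by the positive roots; unlike Humphreys' simple
systems, they are not required to be linearly independent. -/
def IsSimple (Δ : Finset E) : Prop :=
  Δ ⊆ Φ.pos ∧ (∀ γ ∈ Φ.pos, γ ∈ PointedCone.hull ℝ (Δ : Set E)) ∧
    ∀ δ ∈ Δ, δ ∉ PointedCone.hull ℝ (Δ.erase δ : Set E)

lemma exists_isSimple : ∃ Δ, Φ.IsSimple Δ := by
  let generating := Φ.pos.powerset.filter
    fun Δ : Finset E => ∀ γ ∈ Φ.pos, γ ∈ PointedCone.hull ℝ (Δ : Set E)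
  obtain ⟨Δ, hΔ, hmin⟩ := generating.exists_min_image Finset.card
    ⟨Φ.pos, by simpa [generating] using fun γ hγ => PointedCone.subset_hull (by simpa using hγ)⟩
  simp only [generating, Finset.mem_filter, Finset.mem_powerset] at hΔ hmin
  refine ⟨Δ, hΔ.1, hΔ.2, fun δ hδ hδmem => ?_⟩
  have hle : PointedCone.hull ℝ (Δ : Set E) ≤ PointedCone.hull ℝ (Δ.erase δ : Set E) := by
    refine Submodule.span_le.mpr fun γ hγ => ?_
    by_cases h : γ = δ
    · exact h ▸ hδmem
    · exact PointedCone.subset_hull (Finset.mem_erase.mpr ⟨h, hγ⟩)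
  have := hmin (Δ.erase δ) ⟨(Finset.erase_subset _ _).trans hΔ.1, fun γ hγ => hle (hΔ.2 γ hγ)⟩
  rw [Finset.card_erase_of_mem hδ] at this
  have := Finset.card_pos.mpr ⟨δ, hδ⟩
  omega

noncomputable def simple : Finset E := Φ.exists_isSimple.choose

lemma simple_subset : Φ.simple ⊆ Φ.pos := Φ.exists_isSimple.choose_spec.1

lemma mem_hull_simple {γ : E} (hγ : γ ∈ Φ.pos) : γ ∈ PointedCone.hull ℝ (Φ.simple : Set E) :=
  Φ.exists_isSimple.choose_spec.2.1 γ hγ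

lemma notMem_hull_erase {δ : E} (hδ : δ ∈ Φ.simple) :
    δ ∉ PointedCone.hull ℝ (Φ.simple.erase δ : Set E) :=
  Φ.exists_isSimple.choose_spec.2.2 δ hδ

lemma ne_zero_of_mem {γ : E} (hγ : γ ∈ Φ.pos) : γ ≠ 0 := by
  rintro rfl
  simpa using Φ.inner_height_pos 0 hγ

lemma neg_notMem {γ : E} (hγ : γ ∈ Φ.pos) : -γ ∉ Φ.pos := fun hγ' => by
  have := Φ.inner_height_pos γ hγ
  have := Φ.inner_height_pos (-γ) hγ'
  rw [inner_neg_right] at this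
  linarith

/-- The ray through a simple root is a face of the cone spanned by the simple roots. -/
lemma exists_eq_smul_of_add_eq_smul {δ x y : E} {c : ℝ} (hδ : δ ∈ Φ.simple)
    (hx : x ∈ PointedCone.hull ℝ (Φ.simple : Set E))
    (hy : y ∈ PointedCone.hull ℝ (Φ.simple : Set E)) (hxy : x + y = c • δ) :
    ∃ a : ℝ, x = a • δ := by
  have hpos : ∀ γ ∈ (Φ.simple.erase δ : Set E), 0 < ⟪Φ.height, γ⟫ := fun γ hγ =>
    Φ.inner_height_pos γ (Φ.simple_subset (Finset.mem_of_mem_erase hγ))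
  rw [← Finset.insert_erase hδ, Finset.coe_insert] at hx hy
  obtain ⟨a, u, hu, rfl⟩ := Submodule.mem_span_insert.mp hx
  obtain ⟨b, v, hv, rfl⟩ := Submodule.mem_span_insert.mp hy
  simp only [← Nonneg.coe_smul] at hxy ⊢
  have huv : u + v = (c - a - b) • δ := by rw [sub_smul, sub_smul, ← hxy]; abel
  rcases lt_or_ge 0 (c - a - b) with hpos' | hnonpos
  · refine absurd ?_ (Φ.notMem_hull_erase hδ)
    let r : {r : ℝ // 0 ≤ r} := ⟨(c - a - b)⁻¹, inv_nonneg.mpr hpos'.le⟩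
    have hr : r • (u + v) = δ := by
      rw [← Nonneg.coe_smul, huv, smul_smul, inv_mul_cancel₀ hpos'.ne', one_smul]
    have hmem := Submodule.smul_mem _ r (Submodule.add_mem _ hu hv)
    rwa [hr] at hmem
  · refine ⟨a, ?_⟩
    have hsum : ⟪Φ.height, u⟫ + ⟪Φ.height, v⟫ ≤ 0 := by
      rw [← inner_add_right, huv, real_inner_smul_right]
      exact mul_nonpos_of_nonpos_of_nonneg hnonpos
        (Φ.inner_height_pos δ (Φ.simple_subset hδ)).le
    have := inner_nonneg_of_mem_hull (fun γ hγ => (hpos γ hγ).le) hv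
    rw [eq_zero_of_mem_hull_of_inner_nonpos hpos hu (by linarith), add_zero]

lemma rootReflection_apply_mem {δ γ : E} (hδ : δ ∈ Φ.simple) (hγ : γ ∈ Φ.pos)
    (hγδ : ∀ c : ℝ, γ ≠ c • δ) : rootReflection δ γ ∈ Φ.pos := by
  refine (Φ.apply_mem_or_neg_mem _ (Φ.rootReflection_mem δ (Φ.simple_subset hδ)) γ
    hγ).resolve_right fun hneg => ?_
  obtain ⟨a, ha⟩ := Φ.exists_eq_smul_of_add_eq_smul hδ (Φ.mem_hull_simple hγ)
    (Φ.mem_hull_simple hneg) (c := 2 * ⟪δ, γ⟫ / ‖δ‖ ^ 2)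
    (by rw [rootReflection_apply]; abel)
  exact hγδ a ha

lemma exists_simple_inner_pos {γ : E} (hγ : γ ∈ Φ.pos) : ∃ δ ∈ Φ.simple, 0 < ⟪δ, γ⟫ := by
  by_contra! h
  have := inner_nonneg_of_mem_hull (v := -γ) (fun δ hδ => by
    rw [inner_neg_left, real_inner_comm]; linarith [h δ hδ]) (Φ.mem_hull_simple hγ)
  rw [inner_neg_left, neg_nonneg] at this
  exact Φ.ne_zero_of_mem hγ (real_inner_self_nonpos.mp this)

lemma rootReflection_mem_closure_simple {γ : E} (hγ : γ ∈ Φ.pos) :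
    rootReflection γ ∈ Subgroup.closure (rootReflection '' (Φ.simple : Set E)) := by
  set G := Subgroup.closure (rootReflection '' (Φ.simple : Set E))
  have hsimple {δ : E} (hδ : δ ∈ Φ.simple) : rootReflection δ ∈ G :=
    Subgroup.subset_closure ⟨δ, hδ, rfl⟩
  by_contra hγG
  -- a counterexample of minimal height
  obtain ⟨γ, hbad, hmin⟩ := (Φ.pos.filter fun γ => rootReflection γ ∉ G).exists_min_image
    (fun γ => ⟪Φ.height, γ⟫) ⟨γ, Finset.mem_filter.mpr ⟨hγ, hγG⟩⟩
  simp only [Finset.mem_filter, and_imp] at hbad hmin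
  obtain ⟨δ, hδ, hδγ⟩ := Φ.exists_simple_inner_pos hbad.1
  by_cases hpar : ∃ c : ℝ, γ = c • δ
  · obtain ⟨c, rfl⟩ := hpar
    have hc : c ≠ 0 := by rintro rfl; exact Φ.ne_zero_of_mem hbad.1 (zero_smul ℝ δ)
    exact hbad.2 (rootReflection_smul δ hc ▸ hsimple hδ)
  push Not at hpar
  have hγ' := Φ.rootReflection_apply_mem hδ hbad.1 hpar
  have hlt : ⟪Φ.height, rootReflection δ γ⟫ < ⟪Φ.height, γ⟫ := by
    have := Φ.inner_height_pos δ (Φ.simple_subset hδ)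
    have : 0 < ‖δ‖ := norm_pos_iff.mpr (Φ.ne_zero_of_mem (Φ.simple_subset hδ))
    rw [rootReflection_apply, inner_sub_right, real_inner_smul_right]
    have : 0 < 2 * ⟪δ, γ⟫ / ‖δ‖ ^ 2 := by positivity
    nlinarith
  have hconj : rootReflection γ =
      rootReflection δ * rootReflection (rootReflection δ γ) * (rootReflection δ)⁻¹ := by
    rw [← rootReflection_map, rootReflection_rootReflection]
  refine hbad.2 (hconj ▸ G.mul_mem (G.mul_mem (hsimple hδ) ?_) (G.inv_mem (hsimple hδ)))
  by_contra h
  exact hlt.not_ge (hmin _ hγ' h)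

lemma exists_list_prod_eq {w : E ≃ₗᵢ[ℝ] E} (hw : w ∈ Φ.W) :
    ∃ L : List (E ≃ₗᵢ[ℝ] E), (∀ u ∈ L, u ∈ rootReflection '' (Φ.simple : Set E)) ∧
      L.prod = w := by
  have hclosure : Φ.W ≤ Subgroup.closure (rootReflection '' (Φ.simple : Set E)) :=
    Φ.le_closure.trans <| (Subgroup.closure_le _).mpr <| by
      rintro _ ⟨γ, hγ, rfl⟩
      exact Φ.rootReflection_mem_closure_simple hγ
  have hw' := hclosure hw
  clear hw
  induction hw' using Subgroup.closure_induction_left with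
  | one => exact ⟨[], by simp, rfl⟩
  | mul_left u hu w _ ih =>
    obtain ⟨L, hL, rfl⟩ := ih
    exact ⟨u :: L, List.forall_mem_cons.mpr ⟨hu, hL⟩, rfl⟩
  | inv_mul_cancel u hu w _ ih =>
    obtain ⟨L, hL, rfl⟩ := ih
    obtain ⟨δ, hδ, rfl⟩ := hu
    exact ⟨rootReflection δ :: L, List.forall_mem_cons.mpr ⟨⟨δ, hδ, rfl⟩, hL⟩, by simp⟩

lemma pos_of_smul_mem {γ : E} {c : ℝ} (hγ : γ ∈ Φ.pos) (hcγ : c • γ ∈ Φ.pos) : 0 < c := by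
  have := Φ.inner_height_pos _ hcγ
  rw [real_inner_smul_right] at this
  exact pos_of_mul_pos_left this (Φ.inner_height_pos γ hγ).le

lemma list_prod_mem {L : List (E ≃ₗᵢ[ℝ] E)}
    (hL : ∀ u ∈ L, u ∈ rootReflection '' (Φ.simple : Set E)) : L.prod ∈ Φ.W :=
  Φ.W.list_prod_mem fun u hu => by
    obtain ⟨δ, hδ, rfl⟩ := hL u hu
    exact Φ.rootReflection_mem δ (Φ.simple_subset hδ)

/-- The exchange condition. -/
lemma exists_shorter_list_prod_eq_mul (L : List (E ≃ₗᵢ[ℝ] E))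
    (hL : ∀ u ∈ L, u ∈ rootReflection '' (Φ.simple : Set E)) {δ : E} (hδ : δ ∈ Φ.simple)
    (hneg : -L.prod δ ∈ Φ.pos) :
    ∃ L' : List (E ≃ₗᵢ[ℝ] E), (∀ u ∈ L', u ∈ rootReflection '' (Φ.simple : Set E)) ∧
      L'.prod = L.prod * rootReflection δ ∧ L'.length < L.length := by
  induction L with
  | nil => exact absurd hneg (by simpa using Φ.neg_notMem (Φ.simple_subset hδ))
  | cons u M ih =>
    obtain ⟨⟨μ, hμ, rfl⟩, hM⟩ := List.forall_mem_cons.mp hL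
    rcases Φ.apply_mem_or_neg_mem _ (Φ.list_prod_mem hM) δ (Φ.simple_subset hδ) with hpos | hneg'
    · -- `rootReflection μ` sends the positive root `M.prod δ` to a negative one
      obtain ⟨c, hc⟩ : ∃ c : ℝ, M.prod δ = c • μ := by
        by_contra! h
        exact Φ.neg_notMem (Φ.rootReflection_apply_mem hμ hpos h) (by simpa using hneg)
      have hc0 : c ≠ 0 := by
        rintro rfl
        exact Φ.ne_zero_of_mem hpos (hc.trans (zero_smul ℝ μ))
      have hconj : rootReflection μ = M.prod * rootReflection δ * M.prod⁻¹ := by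
        rw [← rootReflection_map, hc, rootReflection_smul μ hc0]
      exact ⟨M, hM, by simp [hconj, mul_assoc], by simp⟩
    · obtain ⟨M', hM', hprod, hlen⟩ := ih hM hneg'
      exact ⟨rootReflection μ :: M', List.forall_mem_cons.mpr ⟨⟨μ, hμ, rfl⟩, hM'⟩,
        by simp [hprod, mul_assoc], by simpa using hlen⟩

lemma eq_one_of_forall_apply_mem {w : E ≃ₗᵢ[ℝ] E} (hw : w ∈ Φ.W)
    (hwpos : ∀ δ ∈ Φ.simple, w δ ∈ Φ.pos) : w = 1 := by
  obtain ⟨L, hL, rfl⟩ := Φ.exists_list_prod_eq hw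
  clear hw
  induction hn : L.length using Nat.strong_induction_on generalizing L with
  | _ n ih =>
  rcases L.eq_nil_or_concat with rfl | ⟨M, u, rfl⟩
  · rfl
  simp only [List.concat_eq_append, List.forall_mem_append, List.forall_mem_singleton] at hL
  obtain ⟨hM, δ, hδ, rfl⟩ := hL
  have hneg : -M.prod δ ∈ Φ.pos := by simpa using hwpos δ hδ
  obtain ⟨M', hM', hprod, hlen⟩ := Φ.exists_shorter_list_prod_eq_mul M hM hδ hneg
  have hprod' : M'.prod = (M.concat (rootReflection δ)).prod := by simp [hprod]
  rw [← hprod']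
  exact ih _ (by simp at hn; omega) M' hM' (hprod' ▸ hwpos) rfl

def IsDominant (x : E) : Prop := ∀ γ ∈ Φ.pos, 0 ≤ ⟪x, γ⟫

noncomputable def inversions (w : E ≃ₗᵢ[ℝ] E) : Finset E := Φ.pos.filter fun γ => -w γ ∈ Φ.pos

lemma card_inversions_mul_lt {w : E ≃ₗᵢ[ℝ] E} {δ : E} (hδ : δ ∈ Φ.simple)
    (hneg : -w δ ∈ Φ.pos) :
    (Φ.inversions (w * rootReflection δ)).card < (Φ.inversions w).card := by
  have hδpos := Φ.simple_subset hδ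
  have hmaps : Set.MapsTo (rootReflection δ) (Φ.inversions (w * rootReflection δ))
      ((Φ.inversions w).erase δ) := by
    intro γ hγ
    obtain ⟨hγ, hwγ⟩ := Finset.mem_filter.mp (Finset.mem_coe.mp hγ)
    rw [LinearIsometryEquiv.coe_mul, Function.comp_apply] at hwγ
    refine Finset.mem_erase.mpr ⟨fun h => Φ.neg_notMem hδpos ?_, Finset.mem_filter.mpr ⟨?_, hwγ⟩⟩
    · rwa [← rootReflection_rootReflection δ γ, h, rootReflection_self] at hγ
    · by_contra hγ'
      obtain ⟨c, rfl⟩ : ∃ c : ℝ, γ = c • δ := by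
        by_contra! h
        exact hγ' (Φ.rootReflection_apply_mem hδ hγ h)
      have := Φ.pos_of_smul_mem hδpos hγ
      have := Φ.pos_of_smul_mem hneg (c := -c) (by simpa using hwγ)
      linarith
  calc (Φ.inversions (w * rootReflection δ)).card
      ≤ ((Φ.inversions w).erase δ).card :=
        Finset.card_le_card_of_injOn _ hmaps (rootReflection δ).injective.injOn
    _ < (Φ.inversions w).card :=
        Finset.card_erase_lt_of_mem (Finset.mem_filter.mpr ⟨hδpos, hneg⟩)

theorem inner_apply_le {w : E ≃ₗᵢ[ℝ] E} (hw : w ∈ Φ.W) {x t : E} (hx : Φ.IsDominant x)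
    (ht : Φ.IsDominant t) : ⟪w x, t⟫ ≤ ⟪x, t⟫ := by
  induction hn : (Φ.inversions w).card using Nat.strong_induction_on generalizing w with
  | _ n ih =>
  by_cases hex : ∃ δ ∈ Φ.simple, -w δ ∈ Φ.pos
  · obtain ⟨δ, hδ, hneg⟩ := hex
    have hδpos := Φ.simple_subset hδ
    have hle := ih _ (hn ▸ Φ.card_inversions_mul_lt hδ hneg)
      (Φ.W.mul_mem hw (Φ.rootReflection_mem δ hδpos)) rfl
    have hk : 0 ≤ 2 * ⟪δ, x⟫ / ‖δ‖ ^ 2 := by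
      have := hx δ hδpos
      rw [real_inner_comm] at this
      positivity
    have hwδ : ⟪w δ, t⟫ ≤ 0 := by
      have := ht _ hneg
      rw [inner_neg_right, real_inner_comm] at this
      linarith
    have : (w * rootReflection δ) x = w x - (2 * ⟪δ, x⟫ / ‖δ‖ ^ 2) • w δ := by
      simp [rootReflection_apply]
    rw [this, inner_sub_left, real_inner_smul_left] at hle
    nlinarith
  · push Not at hex
    rw [Φ.eq_one_of_forall_apply_mem hw fun δ hδ =>
      (Φ.apply_mem_or_neg_mem w hw δ (Φ.simple_subset hδ)).resolve_right (hex δ hδ)]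
    rfl

end PositiveSystem

noncomputable def positiveRoots (R : Finset E) (v : E) : Finset E :=
  (R ∪ -R).filter fun γ => 0 < ⟪v, γ⟫

lemma mem_positiveRoots {R : Finset E} {v γ : E} :
    γ ∈ positiveRoots R v ↔ (γ ∈ R ∨ -γ ∈ R) ∧ 0 < ⟪v, γ⟫ := by
  simp [positiveRoots]

lemma mem_or_neg_mem_positiveRoots {R : Finset E} {v β : E} (hv : ∀ α ∈ R, ⟪v, α⟫ ≠ 0)
    (hβ : β ∈ R ∨ -β ∈ R) : β ∈ positiveRoots R v ∨ -β ∈ positiveRoots R v := by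
  have : ⟪v, β⟫ ≠ 0 := by
    rcases hβ with hβ | hβ
    · exact hv β hβ
    · simpa using hv _ hβ
  rcases this.lt_or_gt with h | h
  · exact Or.inr (mem_positiveRoots.mpr ⟨by simpa [or_comm] using hβ, by simpa using h⟩)
  · exact Or.inl (mem_positiveRoots.mpr ⟨hβ, h⟩)

namespace PositiveSystem

noncomputable def ofRoots (W : Subgroup (E ≃ₗᵢ[ℝ] E)) (R : Finset E) (v : E)
    (hv : ∀ α ∈ R, ⟪v, α⟫ ≠ 0) (hRW : ∀ w ∈ W, ∀ α ∈ R, w α ∈ R ∨ -w α ∈ R)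
    (hW : W = Subgroup.closure (rootReflection '' (R : Set E))) : PositiveSystem E where
  W := W
  pos := positiveRoots R v
  height := v
  inner_height_pos γ hγ := (mem_positiveRoots.mp hγ).2
  rootReflection_mem γ hγ := by
    rw [hW]
    rcases (mem_positiveRoots.mp hγ).1 with hγ | hγ
    · exact Subgroup.subset_closure ⟨γ, hγ, rfl⟩
    · exact rootReflection_neg γ ▸ Subgroup.subset_closure ⟨-γ, hγ, rfl⟩
  apply_mem_or_neg_mem w hw γ hγ := by
    refine mem_or_neg_mem_positiveRoots hv ?_
    rcases (mem_positiveRoots.mp hγ).1 with hγ | hγ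
    · exact hRW w hw γ hγ
    · simpa [or_comm] using hRW w hw _ hγ
  le_closure := by
    rw [hW, Subgroup.closure_le]
    rintro _ ⟨α, hα, rfl⟩
    rcases mem_or_neg_mem_positiveRoots hv (Or.inl hα) with h | h
    · exact Subgroup.subset_closure ⟨α, h, rfl⟩
    · exact rootReflection_neg α ▸ Subgroup.subset_closure ⟨-α, h, rfl⟩

end PositiveSystem

lemma exists_inner_ne_zero (R : Finset E) (hR : ∀ α ∈ R, α ≠ 0) :
    ∃ v : E, ∀ α ∈ R, ⟪v, α⟫ ≠ 0 := by
  by_contra! h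
  obtain ⟨⟨α, hα⟩, htop⟩ := Subspace.exists_eq_top_of_iUnion_eq_univ
    (p := fun α : R => (ℝ ∙ (α : E))ᗮ) <| Set.eq_univ_of_forall fun v => by
      obtain ⟨α, hα, hvα⟩ := h v
      exact Set.mem_iUnion.mpr ⟨⟨α, hα⟩,
        (Submodule.mem_orthogonal_singleton_iff_inner_right).mpr (by rwa [real_inner_comm])⟩
  exact hR α hα (by simpa [Submodule.orthogonal_eq_top_iff] using htop)

lemma exists_inner_ne_zero_and_pos (R : Finset E) (hR : ∀ α ∈ R, α ≠ 0) (g : E) :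
    ∃ v : E, ∀ α ∈ R, ⟪v, α⟫ ≠ 0 ∧ (0 < ⟪g, α⟫ → 0 < ⟪v, α⟫) := by
  obtain ⟨h, hh⟩ := exists_inner_ne_zero R hR
  have hev : ∀ α ∈ R, ∀ᶠ ε in 𝓝[>] (0 : ℝ),
      ⟪g + ε • h, α⟫ ≠ 0 ∧ (0 < ⟪g, α⟫ → 0 < ⟪g + ε • h, α⟫) := by
    intro α hα
    simp only [inner_add_left, real_inner_smul_left]
    have hlim : Tendsto (fun ε : ℝ => ⟪g, α⟫ + ε * ⟪h, α⟫) (𝓝[>] 0) (𝓝 ⟪g, α⟫) := by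
      have : Continuous fun ε : ℝ => ⟪g, α⟫ + ε * ⟪h, α⟫ := by fun_prop
      simpa using this.tendsto 0 |>.mono_left nhdsWithin_le_nhds
    rcases lt_trichotomy ⟪g, α⟫ 0 with hneg | hzero | hpos
    · filter_upwards [hlim.eventually (gt_mem_nhds hneg)] with ε hε
      exact ⟨hε.ne, fun h => absurd h hneg.not_gt⟩
    · filter_upwards [self_mem_nhdsWithin] with ε (hε : 0 < ε)
      rw [hzero, zero_add]
      exact ⟨mul_ne_zero hε.ne' (hh α hα), fun h => absurd h (lt_irrefl 0)⟩
    · filter_upwards [hlim.eventually (lt_mem_nhds hpos)] with ε hε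
      exact ⟨hε.ne', fun _ => hε⟩
  obtain ⟨ε, hε⟩ := ((eventually_all_finset R).mpr hev).exists
  exact ⟨g + ε • h, hε⟩

theorem inner_apply_le_of_forall_inner_nonneg (W : Subgroup (E ≃ₗᵢ[ℝ] E)) (R : Finset E)
    (hR : ∀ α ∈ R, α ≠ 0) (hRW : ∀ w ∈ W, ∀ α ∈ R, w α ∈ R ∨ -w α ∈ R)
    (hW : W = Subgroup.closure (rootReflection '' (R : Set E))) {ρ t : E}
    (hρ : ∀ α ∈ R, 0 ≤ ⟪ρ, α⟫) (ht : ∀ α ∈ R, 0 ≤ ⟪t, α⟫) {w : E ≃ₗᵢ[ℝ] E} (hw : w ∈ W) :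
    ⟪w ρ, t⟫ ≤ ⟪ρ, t⟫ := by
  obtain ⟨v, hv⟩ := exists_inner_ne_zero_and_pos R hR (ρ + t)
  let Φ := PositiveSystem.ofRoots W R v (fun α hα => (hv α hα).1) hRW hW
  -- a root negative on `v` is orthogonal to `ρ + t`, hence to `ρ` and to `t`
  have hdom (x : E) (hx : ∀ α ∈ R, 0 ≤ ⟪x, α⟫) (hxv : ∀ α ∈ R, 0 < ⟪x, α⟫ → 0 < ⟪v, α⟫) :
      Φ.IsDominant x := by
    intro γ hγ
    obtain ⟨hγR | hγR, hvγ⟩ := mem_positiveRoots.mp hγ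
    · exact hx γ hγR
    · have h0 : ¬ 0 < ⟪x, -γ⟫ := fun h => by
        have := hxv _ hγR h
        rw [inner_neg_right] at this
        linarith
      rw [inner_neg_right] at h0
      linarith
  refine Φ.inner_apply_le hw (hdom ρ hρ fun α hα h => ?_) (hdom t ht fun α hα h => ?_)
  · exact (hv α hα).2 (by rw [inner_add_left]; linarith [ht α hα])
  · exact (hv α hα).2 (by rw [inner_add_left]; linarith [hρ α hα])

lemma exists_inv_smul_mem_of_mem_interior {F : Type*} [AddCommGroup F] [Module ℝ F]
    [TopologicalSpace F] [ContinuousSMul ℝ F] {K : Set F} {ξ : F} (hξ : ξ ∈ interior K) :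
    ∃ s : ℝ, 0 < s ∧ s < 1 ∧ s⁻¹ • ξ ∈ K := by
  have hev : ∀ᶠ c in 𝓝 (1 : ℝ), c • ξ ∈ interior K :=
    (continuous_id.smul continuous_const).continuousAt.preimage_mem_nhds
      (by simpa using isOpen_interior.mem_nhds hξ)
  obtain ⟨c, hc, hc1⟩ := ((hev.filter_mono nhdsWithin_le_nhds).and
    (self_mem_nhdsWithin (s := Set.Ioi 1))).exists
  exact ⟨c⁻¹, by positivity, inv_lt_one_of_one_lt₀ hc1, by simpa using interior_subset hc⟩

theorem stmt_6_general (q : ℕ) (Rp : Finset (EuclideanSpace ℝ (Fin q)))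
    (hR0 : ∀ α ∈ Rp, α ≠ 0)
    (W : Subgroup (EuclideanSpace ℝ (Fin q) ≃ₗᵢ[ℝ] EuclideanSpace ℝ (Fin q)))
    (hWgen : W = Subgroup.closure
      {w | ∃ α ∈ Rp, w = Submodule.reflection ((ℝ ∙ α)ᗮ : Submodule ℝ (EuclideanSpace ℝ (Fin q)))})
    (hWR : ∀ w ∈ W, ∀ α ∈ Rp, w α ∈ (Rp : Set (EuclideanSpace ℝ (Fin q))) ∨
      -(w α) ∈ (Rp : Set (EuclideanSpace ℝ (Fin q))))
    (C : Set (EuclideanSpace ℝ (Fin q)))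
    (hC : C = {x | ∀ α ∈ Rp, 0 ≤ ⟪x, α⟫})
    (ρ ξ : EuclideanSpace ℝ (Fin q)) (hρ : ρ ∈ C)
    (hint : ξ ∈ interior (convexHull ℝ
      ((fun w : EuclideanSpace ℝ (Fin q) ≃ₗᵢ[ℝ] EuclideanSpace ℝ (Fin q) => w ρ) ''
        (W : Set (EuclideanSpace ℝ (Fin q) ≃ₗᵢ[ℝ] EuclideanSpace ℝ (Fin q)))))) :
    ∃ s : ℝ, 0 < s ∧ s < 1 ∧
      ξ ∈ convexHull ℝ
        ((fun w : EuclideanSpace ℝ (Fin q) ≃ₗᵢ[ℝ] EuclideanSpace ℝ (Fin q) => w (s • ρ)) ''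
          (W : Set (EuclideanSpace ℝ (Fin q) ≃ₗᵢ[ℝ] EuclideanSpace ℝ (Fin q)))) ∧
      ∀ t ∈ C, ⟪ξ - ρ, t⟫ ≤ -((1 - s) * ⟪ρ, t⟫) := by
  have hW : W = Subgroup.closure (rootReflection '' (Rp : Set _)) := by
    rw [hWgen]
    congr 1
    ext w
    simp [rootReflection, eq_comm]
  obtain ⟨s, hs0, hs1, hsξ⟩ := exists_inv_smul_mem_of_mem_interior hint
  have hξs : ξ ∈ convexHull ℝ ((fun w : EuclideanSpace ℝ (Fin q) ≃ₗᵢ[ℝ] _ => w (s • ρ)) ''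
      (W : Set (EuclideanSpace ℝ (Fin q) ≃ₗᵢ[ℝ] EuclideanSpace ℝ (Fin q)))) := by
    simp only [map_smul]
    rw [← Set.image_image (fun x => s • x), Set.image_smul, convexHull_smul,
      Set.mem_smul_set_iff_inv_smul_mem₀ hs0.ne']
    exact hsξ
  refine ⟨s, hs0, hs1, hξs, fun t ht => ?_⟩
  rw [hC] at hρ ht
  have hbound : ⟪ξ, t⟫ ≤ s * ⟪ρ, t⟫ := by
    refine convexHull_min ?_ (convex_halfSpace_le (f := fun z => ⟪z, t⟫)
      ⟨fun a b => inner_add_left a b t, fun c a => real_inner_smul_left a t c⟩ _) hξs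
    rintro _ ⟨w, hw, rfl⟩
    change ⟪w (s • ρ), t⟫ ≤ s * ⟪ρ, t⟫
    rw [map_smul, real_inner_smul_left]
    exact mul_le_mul_of_nonneg_left
      (inner_apply_le_of_forall_inner_nonneg W Rp hR0 hWR hW hρ ht hw) hs0.le
  rw [inner_sub_left]
  linarith

/-- If `ξ` lies in the interior of the convex hull of the orbit `W·ρ`, then
`ξ ∈ co(W·(s·ρ))` for some `0 < s < 1`, and with `ε = 1 - s` one has
`⟨ξ - ρ, t⟩ ≤ -ε·⟨ρ, t⟩` for all `t` in the chamber `C`. -/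
theorem stmt_6 (q : ℕ) (Rp : Finset (EuclideanSpace ℝ (Fin q)))
    (hR0 : ∀ α ∈ Rp, α ≠ 0)
    (W : Subgroup (EuclideanSpace ℝ (Fin q) ≃ₗᵢ[ℝ] EuclideanSpace ℝ (Fin q)))
    (hWfin : Finite W)
    (hWgen : W = Subgroup.closure
      {w | ∃ α ∈ Rp, w = Submodule.reflection ((ℝ ∙ α)ᗮ : Submodule ℝ (EuclideanSpace ℝ (Fin q)))})
    (hWR : ∀ w ∈ W, ∀ α ∈ Rp, w α ∈ (Rp : Set (EuclideanSpace ℝ (Fin q))) ∨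
      -(w α) ∈ (Rp : Set (EuclideanSpace ℝ (Fin q))))
    (C : Set (EuclideanSpace ℝ (Fin q)))
    (hC : C = {x | ∀ α ∈ Rp, 0 ≤ ⟪x, α⟫})
    (ρ ξ : EuclideanSpace ℝ (Fin q)) (hρ : ρ ∈ C) (hξ : ξ ∈ C)
    (hint : ξ ∈ interior (convexHull ℝ
      ((fun w : EuclideanSpace ℝ (Fin q) ≃ₗᵢ[ℝ] EuclideanSpace ℝ (Fin q) => w ρ) ''
        (W : Set (EuclideanSpace ℝ (Fin q) ≃ₗᵢ[ℝ] EuclideanSpace ℝ (Fin q)))))) :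
    ∃ s : ℝ, 0 < s ∧ s < 1 ∧
      ξ ∈ convexHull ℝ
        ((fun w : EuclideanSpace ℝ (Fin q) ≃ₗᵢ[ℝ] EuclideanSpace ℝ (Fin q) => w (s • ρ)) ''
          (W : Set (EuclideanSpace ℝ (Fin q) ≃ₗᵢ[ℝ] EuclideanSpace ℝ (Fin q)))) ∧
      ∀ t ∈ C, ⟪ξ - ρ, t⟫ ≤ -((1 - s) * ⟪ρ, t⟫) :=
  stmt_6_general q Rp hR0 W hWgen hWR C hC ρ ξ hρ hint
end
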